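/- arXiv:2510.08198 — 2 statements merged into one kernel-verified Lean document; each statement's English description precedes it below -/
import Mathlib

section
/- For every α > 0 and every s > 0, the weighted integral of |u₀(s·)| over the sector W satisfies ∫_W |u₀(s x)| |x|^α dx ≤ 2 (θ_M − θ_m) Γ(2α + 4) δ_W^{−(2α+4)} s^{−α−2}, where Γ is the Gamma function. -/
open MeasureTheory

noncomputable section

/-- The polar angle of a point of `ℝ × ℝ`, via `Complex.arg`. -/
def argP (x : ℝ × ℝ) : ℝ := Complex.arg (x.1 + x.2 * Complex.I)

/-- The Euclidean norm (radius) of a point of `ℝ × ℝ`. -/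
def rad (x : ℝ × ℝ) : ℝ := Real.sqrt (x.1 ^ 2 + x.2 ^ 2)

/-- The CGO solution `u₀(x) = exp(√r (cos(θ/2 + π) + i sin(θ/2 + π)))`. -/
def u0 (x : ℝ × ℝ) : ℂ :=
  Complex.exp ((Real.sqrt (rad x) : ℂ) *
    ((Real.cos (argP x / 2 + Real.pi) : ℂ) + (Real.sin (argP x / 2 + Real.pi) : ℂ) * Complex.I))

/-- The open planar sector `W` with angles `θm < θ < θM`. -/
def sector (θm θM : ℝ) : Set (ℝ × ℝ) :=
  {x | x ≠ 0 ∧ θm < argP x ∧ argP x < θM}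

/-- `δ_W = - max_{θm ≤ θ ≤ θM} cos(θ/2 + π)`. -/
def deltaW (θm θM : ℝ) : ℝ :=
  -sSup ((fun θ : ℝ => Real.cos (θ / 2 + Real.pi)) '' Set.Icc θm θM)

/-- The open Euclidean disk of radius `h` centered at the origin of `ℝ × ℝ`. -/
def ballE (h : ℝ) : Set (ℝ × ℝ) := {x | rad x < h}

/-!
In polar coordinates `‖u₀(s x)‖ = exp (√s √r cos (θ/2 + π)) ≤ exp (-δ_W √s √r)` on `W`, and the
radial integral `∫₀^∞ r^(α+1) e^(-c√r) dr = 2 Γ(2α+4) c^(-(2α+4))` (substitute `r = t²`) times the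
angular width `θM - θm` gives the bound.

If `θm = -π` then `δ_W = 0`, so the right-hand side is `0` (as `0 ^ (2α+4) = 0` and `x / 0 = 0`).
The integral is `0` too, because the integrand is not integrable: on the thin sectors
`-π < θ < -π + 2ε` we have `cos (θ/2 + π) ≥ -ε`, which forces a contribution of order
`ε^(-(2α+3))`.
-/

open Real Set Filter Topology

lemma rad_eq_norm (x : ℝ × ℝ) : rad x = ‖(x.1 + x.2 * Complex.I : ℂ)‖ :=
  (Complex.norm_add_mul_I x.1 x.2).symm

lemma rad_pos {x : ℝ × ℝ} (hx : x ≠ 0) : 0 < rad x := by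
  rw [rad_eq_norm, norm_pos_iff]
  intro h
  exact hx (Prod.ext (by simpa using congrArg Complex.re h) (by simpa using congrArg Complex.im h))

lemma rad_smul {s : ℝ} (hs : 0 ≤ s) (x : ℝ × ℝ) : rad (s • x) = s * rad x := by
  simp only [rad, Prod.smul_fst, Prod.smul_snd, smul_eq_mul]
  rw [show (s * x.1) ^ 2 + (s * x.2) ^ 2 = s ^ 2 * (x.1 ^ 2 + x.2 ^ 2) by ring,
    sqrt_mul (sq_nonneg s), sqrt_sq hs]

lemma argP_smul {s : ℝ} (hs : 0 < s) (x : ℝ × ℝ) : argP (s • x) = argP x := by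
  simp only [argP, Prod.smul_fst, Prod.smul_snd, smul_eq_mul, Complex.ofReal_mul]
  rw [show (s * x.1 + s * x.2 * Complex.I : ℂ) = s * (x.1 + x.2 * Complex.I) by ring,
    Complex.arg_real_mul _ hs]

lemma rad_polarCoord_symm {p : ℝ × ℝ} (hp : 0 ≤ p.1) : rad (polarCoord.symm p) = p.1 := by
  rw [rad, polarCoord_symm_apply, mul_pow, mul_pow, ← mul_add, cos_sq_add_sin_sq, mul_one,
    sqrt_sq hp]

lemma argP_polarCoord_symm {p : ℝ × ℝ} (hp : 0 < p.1) (hθ : p.2 ∈ Ioc (-π) π) :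
    argP (polarCoord.symm p) = p.2 := by
  rw [argP, polarCoord_symm_apply]
  convert Complex.arg_mul_cos_add_sin_mul_I hp hθ using 2
  push_cast
  ring

lemma polarCoord_symm_rad_argP (x : ℝ × ℝ) : polarCoord.symm (rad x, argP x) = x := by
  have h := Complex.norm_mul_cos_add_sin_mul_I (x.1 + x.2 * Complex.I)
  rw [← rad_eq_norm, ← argP] at h
  rw [polarCoord_symm_apply]
  exact Prod.ext (by simpa [Complex.cos_ofReal_re] using congrArg Complex.re h)
    (by simpa [Complex.sin_ofReal_re] using congrArg Complex.im h)

lemma measurableSet_sector (θ₁ θ₂ : ℝ) : MeasurableSet (sector θ₁ θ₂) :=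
  (measurableSet_singleton 0).compl.inter <|
    ((Complex.measurable_arg.comp (by fun_prop)) measurableSet_Ioi).inter
      ((Complex.measurable_arg.comp (by fun_prop)) measurableSet_Iio)

lemma polarCoord_symm_image_sector {θ₁ θ₂ : ℝ} (h₁ : -π ≤ θ₁) (h₂ : θ₂ ≤ π) :
    polarCoord.symm '' (Ioi 0 ×ˢ Ioo θ₁ θ₂) = sector θ₁ θ₂ := by
  ext x
  constructor
  · rintro ⟨p, ⟨hr, hθ⟩, rfl⟩
    have hr : 0 < p.1 := hr
    refine ⟨fun h0 => ?_, ?_⟩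
    · have h := rad_polarCoord_symm hr.le
      rw [h0, rad] at h
      norm_num at h
      exact hr.ne h
    · rwa [argP_polarCoord_symm hr ⟨h₁.trans_lt hθ.1, hθ.2.le.trans h₂⟩]
  · rintro ⟨hx, hθ⟩
    exact ⟨(rad x, argP x), ⟨rad_pos hx, hθ⟩, polarCoord_symm_rad_argP x⟩

section PolarCoordinates

variable {E : Type*} [NormedAddCommGroup E] [NormedSpace ℝ E] {θ₁ θ₂ : ℝ}

lemma injOn_polarCoord_symm_Ioi_prod_Ioo (h₁ : -π ≤ θ₁) (h₂ : θ₂ ≤ π) :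
    InjOn polarCoord.symm (Ioi 0 ×ˢ Ioo θ₁ θ₂) :=
  polarCoord.symm.injOn.mono <| by
    rw [OpenPartialHomeomorph.symm_source, polarCoord_target]
    exact prod_mono_right (Ioo_subset_Ioo h₁ h₂)

lemma eqOn_abs_det_fderivPolarCoordSymm_smul (f : ℝ × ℝ → E) :
    EqOn (fun p => |(fderivPolarCoordSymm p).det| • f (polarCoord.symm p))
      (fun p => p.1 • f (polarCoord.symm p)) (Ioi 0 ×ˢ Ioo θ₁ θ₂) := fun p hp => by
  simp only [det_fderivPolarCoordSymm, abs_of_pos (show 0 < p.1 from hp.1)]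

lemma integral_sector_eq_integral_polar (h₁ : -π ≤ θ₁) (h₂ : θ₂ ≤ π) (f : ℝ × ℝ → E) :
    ∫ x in sector θ₁ θ₂, f x = ∫ p in Ioi 0 ×ˢ Ioo θ₁ θ₂, p.1 • f (polarCoord.symm p) := by
  rw [← polarCoord_symm_image_sector h₁ h₂,
    integral_image_eq_integral_abs_det_fderiv_smul volume
      (measurableSet_Ioi.prod measurableSet_Ioo)
      (fun p _ => (hasFDerivAt_polarCoord_symm p).hasFDerivWithinAt)
      (injOn_polarCoord_symm_Ioi_prod_Ioo h₁ h₂)]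
  exact setIntegral_congr_fun (measurableSet_Ioi.prod measurableSet_Ioo)
    (eqOn_abs_det_fderivPolarCoordSymm_smul f)

lemma integrableOn_sector_iff_polar (h₁ : -π ≤ θ₁) (h₂ : θ₂ ≤ π) (f : ℝ × ℝ → E) :
    IntegrableOn f (sector θ₁ θ₂) ↔
      IntegrableOn (fun p => p.1 • f (polarCoord.symm p)) (Ioi 0 ×ˢ Ioo θ₁ θ₂) := by
  rw [← polarCoord_symm_image_sector h₁ h₂,
    integrableOn_image_iff_integrableOn_abs_det_fderiv_smul volume
      (measurableSet_Ioi.prod measurableSet_Ioo)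
      (fun p _ => (hasFDerivAt_polarCoord_symm p).hasFDerivWithinAt)
      (injOn_polarCoord_symm_Ioi_prod_Ioo h₁ h₂)]
  exact integrableOn_congr_fun (eqOn_abs_det_fderivPolarCoordSymm_smul f)
    (measurableSet_Ioi.prod measurableSet_Ioo)

lemma eqOn_smul_comp_rad_polarCoord_symm (g : ℝ → E) :
    EqOn (fun p => p.1 • g (rad (polarCoord.symm p))) (fun p => p.1 • g p.1)
      (Ioi 0 ×ˢ Ioo θ₁ θ₂) := fun p hp => by
  simp only [rad_polarCoord_symm (le_of_lt (show 0 < p.1 from hp.1))]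

lemma integral_sector_comp_rad (h₁ : -π ≤ θ₁) (h₁₂ : θ₁ ≤ θ₂) (h₂ : θ₂ ≤ π) (g : ℝ → E) :
    ∫ x in sector θ₁ θ₂, g (rad x) = (θ₂ - θ₁) • ∫ r in Ioi 0, r • g r := by
  rw [integral_sector_eq_integral_polar h₁ h₂,
    setIntegral_congr_fun (measurableSet_Ioi.prod measurableSet_Ioo)
      (eqOn_smul_comp_rad_polarCoord_symm g),
    Measure.volume_eq_prod, ← Measure.prod_restrict, integral_fun_fst (fun r => r • g r),
    measureReal_restrict_apply_univ, Real.volume_real_Ioo_of_le h₁₂]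

lemma IntegrableOn.sector_comp_rad (h₁ : -π ≤ θ₁) (h₂ : θ₂ ≤ π) {g : ℝ → E}
    (hg : IntegrableOn (fun r => r • g r) (Ioi 0)) :
    IntegrableOn (fun x => g (rad x)) (sector θ₁ θ₂) := by
  rw [integrableOn_sector_iff_polar h₁ h₂,
    integrableOn_congr_fun (eqOn_smul_comp_rad_polarCoord_symm g)
      (measurableSet_Ioi.prod measurableSet_Ioo), IntegrableOn,
    Measure.volume_eq_prod, ← Measure.prod_restrict]
  exact hg.comp_fst _

end PolarCoordinates

section RadialWeight

variable {c α : ℝ}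

lemma eqOn_mul_exp_neg_mul_sqrt_mul_rpow :
    EqOn (fun r : ℝ => r * (exp (-c * √r) * r ^ α))
      (fun r => r ^ (α + 1) * exp (-c * r ^ (1 / 2 : ℝ))) (Ioi 0) := fun r hr => by
  simp only [sqrt_eq_rpow, rpow_add_one (ne_of_gt (show 0 < r from hr))]
  ring

lemma integrableOn_mul_exp_neg_mul_sqrt_mul_rpow (hc : 0 < c) (hα : -2 < α) :
    IntegrableOn (fun r : ℝ => r * (exp (-c * √r) * r ^ α)) (Ioi 0) :=
  (integrableOn_congr_fun eqOn_mul_exp_neg_mul_sqrt_mul_rpow measurableSet_Ioi).mpr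
    (integrableOn_rpow_mul_exp_neg_mul_rpow (by linarith) (by norm_num) hc)

lemma integral_mul_exp_neg_mul_sqrt_mul_rpow (hc : 0 < c) (hα : -2 < α) :
    ∫ r in Ioi 0, r * (exp (-c * √r) * r ^ α) = 2 * Gamma (2 * α + 4) * c ^ (-(2 * α + 4)) := by
  rw [setIntegral_congr_fun measurableSet_Ioi eqOn_mul_exp_neg_mul_sqrt_mul_rpow,
    integral_rpow_mul_exp_neg_mul_rpow (by norm_num) (by linarith) hc,
    show -(α + 1 + 1) / (1 / 2 : ℝ) = -(2 * α + 4) by ring,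
    show (α + 1 + 1) / (1 / 2 : ℝ) = 2 * α + 4 by ring]
  ring

variable {θ₁ θ₂ : ℝ}

lemma integrableOn_sector_exp_neg_mul_sqrt_rad_mul_rpow (h₁ : -π ≤ θ₁) (h₂ : θ₂ ≤ π)
    (hc : 0 < c) (hα : -2 < α) :
    IntegrableOn (fun x => exp (-c * √(rad x)) * rad x ^ α) (sector θ₁ θ₂) :=
  IntegrableOn.sector_comp_rad (g := fun r => exp (-c * √r) * r ^ α) h₁ h₂
    (integrableOn_mul_exp_neg_mul_sqrt_mul_rpow hc hα)

lemma integral_sector_exp_neg_mul_sqrt_rad_mul_rpow (h₁ : -π ≤ θ₁) (h₁₂ : θ₁ ≤ θ₂)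
    (h₂ : θ₂ ≤ π) (hc : 0 < c) (hα : -2 < α) :
    ∫ x in sector θ₁ θ₂, exp (-c * √(rad x)) * rad x ^ α =
      2 * (θ₂ - θ₁) * Gamma (2 * α + 4) * c ^ (-(2 * α + 4)) := by
  rw [integral_sector_comp_rad h₁ h₁₂ h₂ (fun r => exp (-c * √r) * r ^ α)]
  simp only [smul_eq_mul]
  rw [integral_mul_exp_neg_mul_sqrt_mul_rpow hc hα]
  ring

end RadialWeight

lemma norm_u0_smul {s : ℝ} (hs : 0 < s) (x : ℝ × ℝ) :
    ‖u0 (s • x)‖ = exp (√s * √(rad x) * cos (argP x / 2 + π)) := by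
  rw [u0, Complex.norm_exp, rad_smul hs.le, argP_smul hs, sqrt_mul hs.le]
  congr 1
  simp only [Complex.mul_re, Complex.add_re, Complex.ofReal_re,
    Complex.ofReal_im, Complex.I_re, Complex.I_im]
  ring

lemma cos_le_neg_deltaW {θm θM θ : ℝ} (hθ : θ ∈ Icc θm θM) :
    cos (θ / 2 + π) ≤ -deltaW θm θM := by
  rw [deltaW, neg_neg]
  exact le_csSup ⟨1, by rintro _ ⟨t, -, rfl⟩; exact cos_le_one _⟩ (mem_image_of_mem _ hθ)

lemma deltaW_pos {θm θM : ℝ} (hm : -π < θm) (hmM : θm ≤ θM) (hM : θM < π) :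
    0 < deltaW θm θM := by
  obtain ⟨θ, hθ, hθmax⟩ := (isCompact_Icc.image (by fun_prop : Continuous
    fun θ : ℝ => cos (θ / 2 + π))).sSup_mem ((nonempty_Icc.2 hmM).image _)
  rw [deltaW, neg_pos, ← hθmax]
  exact cos_neg_of_pi_div_two_lt_of_lt (by linarith [hθ.1]) (by linarith [hθ.2])

lemma deltaW_neg_pi {θM : ℝ} (h₁ : -π ≤ θM) (h₂ : θM ≤ π) : deltaW (-π) θM = 0 := by
  rw [deltaW, neg_eq_zero]
  refine IsGreatest.csSup_eq ⟨⟨-π, left_mem_Icc.2 h₁, ?_⟩, ?_⟩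
  · change cos (-π / 2 + π) = 0
    rw [show -π / 2 + π = π / 2 by ring, cos_pi_div_two]
  · rintro _ ⟨θ, hθ, rfl⟩
    exact cos_nonpos_of_pi_div_two_le_of_le (by linarith [hθ.1]) (by linarith [hθ.2])

lemma neg_le_cos_half_add_pi {θ : ℝ} (hθ : -π ≤ θ) : -((θ + π) / 2) ≤ cos (θ / 2 + π) := by
  rw [cos_add_pi, neg_le_neg_iff, ← sin_add_pi_div_two, show θ / 2 + π / 2 = (θ + π) / 2 by ring]
  exact sin_le (by linarith)

lemma norm_u0_smul_le_of_mem_sector {θm θM s : ℝ} (hs : 0 < s) {x : ℝ × ℝ}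
    (hx : x ∈ sector θm θM) :
    ‖u0 (s • x)‖ ≤ exp (-(deltaW θm θM * √s) * √(rad x)) := by
  rw [norm_u0_smul hs, exp_le_exp]
  have := cos_le_neg_deltaW ⟨hx.2.1.le, hx.2.2.le⟩
  nlinarith [mul_nonneg (sqrt_nonneg s) (sqrt_nonneg (rad x))]

lemma exp_le_norm_u0_smul_of_mem_sector_neg_pi {ε s : ℝ} (hs : 0 < s) {x : ℝ × ℝ}
    (hx : x ∈ sector (-π) (-π + 2 * ε)) :
    exp (-(ε * √s) * √(rad x)) ≤ ‖u0 (s • x)‖ := by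
  rw [norm_u0_smul hs, exp_le_exp]
  have := neg_le_cos_half_add_pi hx.2.1.le
  nlinarith [hx.2.2, mul_nonneg (sqrt_nonneg s) (sqrt_nonneg (rad x))]

lemma not_integrableOn_sector_neg_pi {θM α s : ℝ} (hM₁ : -π < θM) (hM₂ : θM ≤ π)
    (hα : -3 / 2 < α) (hs : 0 < s) :
    ¬IntegrableOn (fun x => ‖u0 (s • x)‖ * rad x ^ α) (sector (-π) θM) := by
  intro hint
  set K := 4 * Gamma (2 * α + 4) * √s ^ (-(2 * α + 4))
  have hK : 0 < K := by have := Gamma_pos_of_pos (show 0 < 2 * α + 4 by linarith); positivity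
  have lower : ∀ ε ∈ Ioc 0 ((θM + π) / 2),
      K * ε ^ (-(2 * α + 3)) ≤ ∫ x in sector (-π) θM, ‖u0 (s • x)‖ * rad x ^ α := by
    rintro ε ⟨hε, hεM⟩
    have hsub : sector (-π) (-π + 2 * ε) ⊆ sector (-π) θM :=
      fun x hx => ⟨hx.1, hx.2.1, by linarith [hx.2.2]⟩
    calc K * ε ^ (-(2 * α + 3))
        = ∫ x in sector (-π) (-π + 2 * ε), exp (-(ε * √s) * √(rad x)) * rad x ^ α := by
          rw [integral_sector_exp_neg_mul_sqrt_rad_mul_rpow le_rfl (by linarith) (by linarith)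
            (by positivity) (by linarith), mul_rpow hε.le (sqrt_nonneg s),
            show -(2 * α + 3) = -(2 * α + 4) + 1 by ring, rpow_add_one hε.ne']
          ring
      _ ≤ ∫ x in sector (-π) (-π + 2 * ε), ‖u0 (s • x)‖ * rad x ^ α :=
          setIntegral_mono_on
            (integrableOn_sector_exp_neg_mul_sqrt_rad_mul_rpow le_rfl (by linarith)
              (by positivity) (by linarith))
            (hint.mono_set hsub) (measurableSet_sector _ _) fun x hx =>
              mul_le_mul_of_nonneg_right (exp_le_norm_u0_smul_of_mem_sector_neg_pi hs hx)
                (rpow_nonneg (sqrt_nonneg _) α)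
      _ ≤ ∫ x in sector (-π) θM, ‖u0 (s • x)‖ * rad x ^ α :=
          setIntegral_mono_set hint
            (Eventually.of_forall fun x =>
              mul_nonneg (norm_nonneg _) (rpow_nonneg (sqrt_nonneg _) α))
            hsub.eventuallyLE
  have blowup : Tendsto (fun ε : ℝ => K * ε ^ (-(2 * α + 3))) (𝓝[>] 0) atTop :=
    (tendsto_rpow_neg_nhdsGT_zero (by linarith)).const_mul_atTop hK
  obtain ⟨ε, hbig, hε⟩ := ((blowup.eventually_gt_atTop _).and
    (Ioc_mem_nhdsGT (show (0 : ℝ) < (θM + π) / 2 by linarith))).exists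
  exact (lower ε hε).not_gt hbig

/-- for every `α > 0` and `s > 0`,
`∫_W |u₀(s x)| |x|^α dx ≤ 2 (θM − θm) Γ(2α + 4) δ_W^{−(2α+4)} s^{−α−2}`. -/
theorem stmt_1 (θm θM : ℝ) (hm : -Real.pi ≤ θm) (hmM : θm < θM) (hM : θM < Real.pi)
    (α s : ℝ) (hα : 0 < α) (hs : 0 < s) :
    ∫ x in sector θm θM, ‖u0 (s • x)‖ * rad x ^ α ≤
      2 * (θM - θm) * Real.Gamma (2 * α + 4) / deltaW θm θM ^ (2 * α + 4) *
        s ^ (-α - 2) := by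
  rcases hm.eq_or_lt with rfl | hm
  · rw [deltaW_neg_pi hmM.le hM.le, zero_rpow (by positivity), div_zero, zero_mul,
      integral_undef (not_integrableOn_sector_neg_pi hmM hM.le (by linarith) hs)]
  have hδ := deltaW_pos hm hmM.le hM
  calc ∫ x in sector θm θM, ‖u0 (s • x)‖ * rad x ^ α
      ≤ ∫ x in sector θm θM, exp (-(deltaW θm θM * √s) * √(rad x)) * rad x ^ α :=
        integral_mono_of_nonneg
          (Eventually.of_forall fun x =>
            mul_nonneg (norm_nonneg _) (rpow_nonneg (sqrt_nonneg _) α))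
          (integrableOn_sector_exp_neg_mul_sqrt_rad_mul_rpow hm.le hM.le (by positivity)
            (by linarith))
          (ae_restrict_of_forall_mem (measurableSet_sector _ _) fun x hx =>
            mul_le_mul_of_nonneg_right (norm_u0_smul_le_of_mem_sector hs hx)
              (rpow_nonneg (sqrt_nonneg _) α))
    _ = 2 * (θM - θm) * Gamma (2 * α + 4) * (deltaW θm θM * √s) ^ (-(2 * α + 4)) :=
        integral_sector_exp_neg_mul_sqrt_rad_mul_rpow hm.le hmM.le hM.le (by positivity)
          (by linarith)
    _ = _ := by
        rw [mul_rpow hδ.le (sqrt_nonneg s), rpow_neg hδ.le, sqrt_eq_rpow, ← rpow_mul hs.le,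
          show 1 / 2 * -(2 * α + 4) = -α - 2 by ring, div_eq_mul_inv]
        ring
end
end

section
/- For every s > 0 and h > 0, the radial (outward normal) derivative of x ↦ u₀(s x) on the circular arc Λ_h, namely ∂_r[u₀(s x)] = (√s/(2√r)) (cos(θ/2 + π) + i sin(θ/2 + π)) u₀(s x) evaluated at r = h, satisfies ( ∫_{Λ_h} |∂_r u₀(s x)|² dσ(x) )^{1/2} ≤ (1/2) √s · e^{−δ_W √(s h)} · √(θ_M − θ_m). -/
/-! On the arc `r = h`, `|∂_r u₀(s x)|² h = (s/4) e^{2√(sh) cos(θ/2 + π)}`, since the phase factor has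
modulus one and `|u₀(y)| = e^{√|y| cos(arg y/2 + π)}`. By definition of `δ_W` the cosine is at most
`-δ_W` on `[θ_m, θ_M]`, so the integrand is bounded by the constant `(½ √s e^{-δ_W √(sh)})²`, and
integrating over an interval of length `θ_M - θ_m` gives the bound. -/

open MeasureTheory

noncomputable section

open Set

lemma smul_polar (s r θ : ℝ) :
    s • ((r * Real.cos θ, r * Real.sin θ) : ℝ × ℝ) = ((s * r) * Real.cos θ, (s * r) * Real.sin θ) := by
  ext <;> simp [mul_assoc]

lemma rad_polar (r θ : ℝ) : rad (r * Real.cos θ, r * Real.sin θ) = |r| := by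
  have h : (r * Real.cos θ) ^ 2 + (r * Real.sin θ) ^ 2 = r ^ 2 := by
    linear_combination r ^ 2 * Real.cos_sq_add_sin_sq θ
  rw [rad, h, Real.sqrt_sq_eq_abs]

lemma argP_polar {r θ : ℝ} (hr : 0 < r) (hθ : θ ∈ Ioc (-Real.pi) Real.pi) :
    argP (r * Real.cos θ, r * Real.sin θ) = θ := by
  have h : ((r * Real.cos θ : ℝ) : ℂ) + ((r * Real.sin θ : ℝ) : ℂ) * Complex.I
      = (r : ℂ) * (Complex.cos θ + Complex.sin θ * Complex.I) := by
    push_cast; ring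
  rw [argP, h, Complex.arg_real_mul _ hr, Complex.arg_cos_add_sin_mul_I hθ]

lemma norm_ofReal_cos_add_ofReal_sin_mul_I (t : ℝ) :
    ‖(Real.cos t : ℂ) + (Real.sin t : ℂ) * Complex.I‖ = 1 := by
  rw [Complex.ofReal_cos, Complex.ofReal_sin, Complex.norm_cos_add_sin_mul_I]

lemma norm_u0_polar {r θ : ℝ} (hr : 0 < r) (hθ : θ ∈ Ioc (-Real.pi) Real.pi) :
    ‖u0 (r * Real.cos θ, r * Real.sin θ)‖ = Real.exp (Real.sqrt r * Real.cos (θ / 2 + Real.pi)) := by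
  rw [u0, rad_polar, abs_of_pos hr, argP_polar hr hθ, Complex.norm_exp]
  congr 1
  simp only [Complex.mul_re, Complex.add_re, Complex.ofReal_re, Complex.ofReal_im,
    Complex.I_re, Complex.I_im]
  ring

lemma norm_radialDeriv_sq_mul {s h θ : ℝ} (hs : 0 < s) (hh : 0 < h)
    (hθ : θ ∈ Ioc (-Real.pi) Real.pi) :
    ‖((Real.sqrt s / (2 * Real.sqrt h) : ℝ) : ℂ) *
        ((Real.cos (θ / 2 + Real.pi) : ℂ) + (Real.sin (θ / 2 + Real.pi) : ℂ) * Complex.I) *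
        u0 (s • ((h * Real.cos θ, h * Real.sin θ) : ℝ × ℝ))‖ ^ 2 * h =
      (1 / 2 * Real.sqrt s * Real.exp (Real.sqrt (s * h) * Real.cos (θ / 2 + Real.pi))) ^ 2 := by
  rw [smul_polar, norm_mul, norm_mul, norm_ofReal_cos_add_ofReal_sin_mul_I,
    norm_u0_polar (mul_pos hs hh) hθ, Complex.norm_real, Real.norm_eq_abs,
    abs_of_nonneg (by positivity)]
  field_simp
  rw [Real.sq_sqrt hh.le]

lemma cos_half_add_pi_le_neg_deltaW {θm θM θ : ℝ} (hθ : θ ∈ Icc θm θM) :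
    Real.cos (θ / 2 + Real.pi) ≤ -deltaW θm θM := by
  have hbdd : BddAbove ((fun θ : ℝ => Real.cos (θ / 2 + Real.pi)) '' Icc θm θM) :=
    ⟨1, by rintro y ⟨t, -, rfl⟩; exact Real.cos_le_one _⟩
  rw [deltaW, neg_neg]
  exact le_csSup hbdd (mem_image_of_mem _ hθ)

lemma sqrt_setIntegral_Ioo_le {f : ℝ → ℝ} {a b C : ℝ} (hab : a ≤ b) (hC : 0 ≤ C)
    (hf : ∀ x ∈ Ioo a b, |f x| ≤ C ^ 2) :
    Real.sqrt (∫ x in Ioo a b, f x) ≤ C * Real.sqrt (b - a) := by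
  have hint : ∫ x in Ioo a b, f x ≤ C ^ 2 * (b - a) := by
    rw [← Real.volume_real_Ioo_of_le hab]
    exact (Real.le_norm_self _).trans (norm_setIntegral_le_of_norm_le_const measure_Ioo_lt_top hf)
  calc Real.sqrt (∫ x in Ioo a b, f x)
      ≤ Real.sqrt (C ^ 2 * (b - a)) := Real.sqrt_le_sqrt hint
    _ = C * Real.sqrt (b - a) := by rw [Real.sqrt_mul (sq_nonneg C), Real.sqrt_sq hC]

/-- for every `s > 0` and `h > 0`, the radial derivative
`∂_r[u₀(s x)] = (√s/(2√r)) (cos(θ/2 + π) + i sin(θ/2 + π)) u₀(s x)` at `r = h` satisfies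
`(∫_{Λ_h} |∂_r u₀(s x)|² dσ)^{1/2} ≤ (1/2) √s e^{−δ_W √(s h)} √(θM − θm)`. -/
theorem stmt_6 (θm θM : ℝ) (hm : -Real.pi ≤ θm) (hmM : θm < θM) (hM : θM < Real.pi)
    (s h : ℝ) (hs : 0 < s) (hh : 0 < h) :
    Real.sqrt (∫ θ in Set.Ioo θm θM,
        ‖((Real.sqrt s / (2 * Real.sqrt h) : ℝ) : ℂ) *
            ((Real.cos (θ / 2 + Real.pi) : ℂ) + (Real.sin (θ / 2 + Real.pi) : ℂ) * Complex.I) *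
            u0 (s • ((h * Real.cos θ, h * Real.sin θ) : ℝ × ℝ))‖ ^ 2 * h) ≤
      1 / 2 * Real.sqrt s * Real.exp (-(deltaW θm θM) * Real.sqrt (s * h)) *
        Real.sqrt (θM - θm) := by
  refine sqrt_setIntegral_Ioo_le hmM.le (by positivity) fun θ hθ => ?_
  rw [norm_radialDeriv_sq_mul hs hh ⟨hm.trans_lt hθ.1, (hθ.2.trans hM).le⟩, abs_sq]
  have hcos := cos_half_add_pi_le_neg_deltaW (Ioo_subset_Icc_self hθ)
  have hexp : Real.sqrt (s * h) * Real.cos (θ / 2 + Real.pi) ≤ -deltaW θm θM * Real.sqrt (s * h) := by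
    nlinarith [Real.sqrt_nonneg (s * h)]
  gcongr
end
end
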